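/- Let χ, χ_j be integers, n ≥ 2 an integer, and w_j a rational number with 0 < w_j < 1. If w_j·χ is not an integer and w_j·χ + (n-1) < χ_j < w_j·χ + n, and if n divides χ_j, then for any integers k, c with 1 ≤ k ≤ n-1 satisfying c/k ≤ (w_j·χ)/n + 1 (i.e. n·c ≤ k·w_j·χ + k·n as rationals), one has c/k ≤ χ_j/n, i.e. n·c ≤ k·χ_j. -/
import Mathlib


/-- Arithmetic core of Theorem 2.6(i): if `w_j·χ ∉ ℤ`,
`w_j·χ + (n-1) < χ_j < w_j·χ + n` and `n ∣ χ_j`, then any integers `k, c` with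
`1 ≤ k ≤ n-1` and `n·c ≤ k·w_j·χ + k·n` (as rationals) satisfy `n·c ≤ k·χ_j`. -/
theorem stmt_0 (χ χj n : ℤ) (hn : 2 ≤ n) (w : ℚ) (hw0 : 0 < w) (hw1 : w < 1)
    (hirr : ∀ m : ℤ, w * (χ : ℚ) ≠ (m : ℚ))
    (hlow : w * (χ : ℚ) + ((n : ℚ) - 1) < (χj : ℚ))
    (hhigh : (χj : ℚ) < w * (χ : ℚ) + (n : ℚ))
    (hdvd : n ∣ χj) :
    ∀ k c : ℤ, 1 ≤ k → k ≤ n - 1 →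
      ((n : ℚ) * (c : ℚ) ≤ (k : ℚ) * (w * (χ : ℚ)) + (k : ℚ) * (n : ℚ)) →
      n * c ≤ k * χj := by
  intro k c hk1 hkn hc
  obtain ⟨m, rfl⟩ := hdvd
  -- w·χ < χj - n + 1
  have hx : w * (χ : ℚ) < ((n * m : ℤ) : ℚ) - (n : ℚ) + 1 := by
    push_cast at hlow ⊢
    linarith
  have hkpos : (0 : ℚ) < (k : ℚ) := by exact_mod_cast hk1
  have h1 : (n : ℚ) * (c : ℚ) < (k : ℚ) * ((n * m : ℤ) : ℚ) + (k : ℚ) := by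
    have := mul_lt_mul_of_pos_left hx hkpos
    calc (n : ℚ) * (c : ℚ) ≤ (k : ℚ) * (w * (χ : ℚ)) + (k : ℚ) * (n : ℚ) := hc
      _ < (k : ℚ) * (((n * m : ℤ) : ℚ) - (n : ℚ) + 1) + (k : ℚ) * (n : ℚ) := by linarith
      _ = (k : ℚ) * ((n * m : ℤ) : ℚ) + (k : ℚ) := by ring
  have h2 : n * c < k * (n * m) + k := by exact_mod_cast h1
  -- so n*c ≤ k*n*m + k - 1 ≤ k*n*m + n - 1 < k*n*m + n
  have h3 : n * c < k * (n * m) + n := by omega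
  -- n divides both sides minus k*n*m
  have h4 : n * (c - k * m) < n * 1 := by ring_nf; ring_nf at h3; omega
  have h5 : c - k * m < 1 := lt_of_mul_lt_mul_left h4 (by omega)
  nlinarith [h5, hn]
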